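/- arXiv:2111.04359 — 2 statements merged into one kernel-verified Lean document; each statement's English description precedes it below -/
import Mathlib

section
/- Every entry of the matrix of U_Φ in the computational basis has modulus exactly 2^{−(n+1)/2}; equivalently, 2^{(n+1)/2}·U_Φ is a complex Hadamard matrix (a unitary multiple whose entries all have unit modulus). -/
/-!
Each `S_k` is a CNOT, i.e. a permutation matrix, times `1 ⊗ (Φ_k R_X(−π/2))`, so `U_Φ` is
unitary. For the entries, follow the photon bit through the circuit: each photon gate may set
it to either value, with an amplitude of modulus `1/√2`, and the CNOT of step `k` XORs it into
detector bit `n + 1 − k`. Hence `|j⟩` and `|k⟩` determine the whole path of photon bits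
(`a_k = k_{n+1−k} ⊕ j_{n+1−k}`, `a_{n+1} = k_0`), and `⟨k|U_Φ|j⟩` is a single product of
`n + 1` amplitudes. Inductively, `S_m ⋯ S_1` has entries of modulus `2^{−m/2}` exactly at the
`Reachable` pairs and `0` elsewhere.
-/
open Complex Matrix

/-- The single-qubit gate `R_X(−π/2) = (1/√2)[[1, i],[i, 1]]`. -/
noncomputable def RXgate : Matrix (Fin 2) (Fin 2) ℂ :=
  (1 / Real.sqrt 2 : ℝ) • !![1, I; I, 1]

/-- The single-qubit phase gate `Φ = [[1,0],[0,e^{ix}]]`. -/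
noncomputable def phaseGate (x : ℝ) : Matrix (Fin 2) (Fin 2) ℂ :=
  !![1, 0; 0, Complex.exp (I * x)]

/-- A single-qubit gate `A` applied to the photon qubit (bit `0`) of the
`(n+1)`-qubit space `ℂ^{2^{n+1}}`, whose computational basis vectors `|j⟩` are
indexed by integers `j = Σ_l j_l 2^l`. -/
noncomputable def photonGate (n : ℕ) (A : Matrix (Fin 2) (Fin 2) ℂ) :
    Matrix (Fin (2 ^ (n + 1))) (Fin (2 ^ (n + 1))) ℂ :=
  fun k j => if (k : ℕ) / 2 = (j : ℕ) / 2
    then A ⟨(k : ℕ) % 2, by omega⟩ ⟨(j : ℕ) % 2, by omega⟩ else 0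

/-- CNOT gate on `ℂ^{2^{n+1}}` with control the photon qubit (bit `0`) and target
bit `t`: it maps `|j⟩` to `|j XOR 2^t⟩` when bit `0` of `j` is `1`, else `|j⟩`. -/
def cnotGate (n t : ℕ) : Matrix (Fin (2 ^ (n + 1))) (Fin (2 ^ (n + 1))) ℂ :=
  fun k j =>
    if (k : ℕ) = (if (j : ℕ) % 2 = 1 then (j : ℕ) ^^^ 2 ^ t else (j : ℕ)) then 1 else 0

/-- The `k`-th step `S_k` of the which-path-detector circuit: for `1 ≤ k ≤ n` it applies
`R_X(−π/2)` followed by `Φ_k` to the photon qubit and then a CNOT with control the photon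
qubit and target the `k`-th detector qubit (bit `n+1−k`); `S_{n+1}` applies `R_X(−π/2)`
followed by `Φ_{n+1}` to the photon qubit (no CNOT). -/
noncomputable def stepGate (n : ℕ) (φ : ℕ → ℝ) (k : ℕ) :
    Matrix (Fin (2 ^ (n + 1))) (Fin (2 ^ (n + 1))) ℂ :=
  (if k ≤ n then cnotGate n (n + 1 - k) else 1) * photonGate n (phaseGate (φ k) * RXgate)

/-- The ordered product `S_k ⋯ S_2 S_1`. -/
noncomputable def Sprod (n : ℕ) (φ : ℕ → ℝ) :
    ℕ → Matrix (Fin (2 ^ (n + 1))) (Fin (2 ^ (n + 1))) ℂ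
  | 0 => 1
  | k + 1 => stepGate n φ (k + 1) * Sprod n φ k

/-- The unitary operator `U_Φ = S_{n+1} S_n ⋯ S_1` on the `(n+1)`-qubit space. -/
noncomputable def Uphi (n : ℕ) (φ : ℕ → ℝ) :
    Matrix (Fin (2 ^ (n + 1))) (Fin (2 ^ (n + 1))) ℂ :=
  Sprod n φ (n + 1)


lemma phaseGate_mem_unitaryGroup (x : ℝ) : phaseGate x ∈ unitaryGroup (Fin 2) ℂ := by
  rw [mem_unitaryGroup_iff]
  ext i j
  fin_cases i <;> fin_cases j <;>
    simp [phaseGate, mul_apply, Fin.sum_univ_two, ← Complex.exp_conj, ← Complex.exp_add]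

lemma RXgate_mem_unitaryGroup : RXgate ∈ unitaryGroup (Fin 2) ℂ := by
  rw [mem_unitaryGroup_iff]
  have hsqrt : ((Real.sqrt 2 : ℝ) : ℂ) ^ 2 = 2 := by norm_cast; simp
  ext i j
  fin_cases i <;> fin_cases j <;>
    simp [RXgate, mul_apply, Fin.sum_univ_two] <;> field_simp <;> simp [hsqrt] <;> ring

lemma norm_phaseGate_mul_RXgate_apply (x : ℝ) (a b : Fin 2) :
    ‖(phaseGate x * RXgate) a b‖ = 1 / Real.sqrt 2 := by
  fin_cases a <;> fin_cases b <;>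
    simp [phaseGate, RXgate, mul_apply, Fin.sum_univ_two, Complex.norm_exp]

lemma Matrix.submatrix_equiv_mem_unitaryGroup {m n α : Type*} [Fintype m] [DecidableEq m]
    [Fintype n] [DecidableEq n] [CommRing α] [StarRing α] {U : Matrix m m α}
    (hU : U ∈ unitaryGroup m α) (e : n ≃ m) : U.submatrix e e ∈ unitaryGroup n α := by
  rw [mem_unitaryGroup_iff] at hU ⊢
  rw [star_eq_conjTranspose, conjTranspose_submatrix, submatrix_mul_equiv,
    ← star_eq_conjTranspose, hU, submatrix_one_equiv]

lemma Equiv.Perm.permMatrix_mem_unitaryGroup {n α : Type*} [Fintype n] [DecidableEq n]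
    [CommRing α] [StarRing α] (σ : Equiv.Perm n) : σ.permMatrix α ∈ unitaryGroup n α := by
  rw [mem_unitaryGroup_iff, star_eq_conjTranspose, conjTranspose_permMatrix, ← permMatrix_mul,
    inv_mul_cancel, permMatrix_one]

/-- `(q, a) ↦ 2 q + a`: the photon qubit is the `Fin 2` factor. -/
def photonSplit (n : ℕ) : Fin (2 ^ n) × Fin 2 ≃ Fin (2 ^ (n + 1)) :=
  finProdFinEquiv.trans (finCongr (pow_succ 2 n).symm)

open scoped Kronecker in
lemma photonGate_eq_submatrix_kronecker (n : ℕ) (A : Matrix (Fin 2) (Fin 2) ℂ) :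
    photonGate n A = (1 ⊗ₖ A).submatrix (photonSplit n).symm (photonSplit n).symm := by
  ext k j
  simp [photonGate, photonSplit, one_apply, Fin.ext_iff, Fin.divNat, Fin.modNat]

lemma photonGate_mem_unitaryGroup (n : ℕ) {A : Matrix (Fin 2) (Fin 2) ℂ}
    (hA : A ∈ unitaryGroup (Fin 2) ℂ) : photonGate n A ∈ unitaryGroup (Fin (2 ^ (n + 1))) ℂ := by
  rw [photonGate_eq_submatrix_kronecker]
  exact submatrix_equiv_mem_unitaryGroup (kronecker_mem_unitary (one_mem _) hA) _

lemma photonGate_mul_apply_of_support (n : ℕ) (A : Matrix (Fin 2) (Fin 2) ℂ)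
    (X : Matrix (Fin (2 ^ (n + 1))) (Fin (2 ^ (n + 1))) ℂ) {k k₀ j : Fin (2 ^ (n + 1))}
    (hk₀ : (k₀ : ℕ) / 2 = k / 2)
    (hX : ∀ k' : Fin (2 ^ (n + 1)), (k' : ℕ) / 2 = k / 2 → k' ≠ k₀ → X k' j = 0) :
    (photonGate n A * X) k j = A ⟨k % 2, by omega⟩ ⟨k₀ % 2, by omega⟩ * X k₀ j := by
  rw [mul_apply, Finset.sum_eq_single k₀ _ (by simp)]
  · simp [photonGate, hk₀]
  · intro k' _ hne
    by_cases hk' : (k' : ℕ) / 2 = k / 2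
    · rw [hX k' hk' hne, mul_zero]
    · simp [photonGate, Ne.symm hk']

def cnotFun (t x : ℕ) : ℕ := if x % 2 = 1 then x ^^^ 2 ^ t else x

lemma testBit_cnotFun (t x i : ℕ) :
    (cnotFun t x).testBit i = (x.testBit i ^^ (decide (i = t) && x.testBit 0)) := by
  unfold cnotFun
  split_ifs with h <;> simp [Nat.testBit_xor, Nat.testBit_two_pow, Nat.testBit_zero, h, eq_comm]

lemma cnotFun_involutive {t : ℕ} (ht : 0 < t) : Function.Involutive (cnotFun t) := fun x => by
  have h0 : (cnotFun t x).testBit 0 = x.testBit 0 := by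
    rw [testBit_cnotFun]
    simp [ht.ne]
  apply Nat.eq_of_testBit_eq
  intro i
  rw [testBit_cnotFun, testBit_cnotFun, h0, Bool.xor_assoc, Bool.xor_self, Bool.xor_false]

lemma cnotFun_lt {n t x : ℕ} (ht : t ≤ n) (hx : x < 2 ^ (n + 1)) : cnotFun t x < 2 ^ (n + 1) := by
  unfold cnotFun
  split_ifs
  · exact Nat.xor_lt_two_pow hx (Nat.pow_lt_pow_right (by norm_num) (by omega))
  · exact hx

def cnotPerm (n : ℕ) {t : ℕ} (ht : 0 < t) (htn : t ≤ n) : Equiv.Perm (Fin (2 ^ (n + 1))) :=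
  Function.Involutive.toPerm (fun x => ⟨cnotFun t x, cnotFun_lt htn x.isLt⟩) fun x =>
    Fin.ext (cnotFun_involutive ht x)

lemma cnotPerm_apply_val (n : ℕ) {t : ℕ} (ht : 0 < t) (htn : t ≤ n) (k : Fin (2 ^ (n + 1))) :
    (cnotPerm n ht htn k : ℕ) = cnotFun t k := rfl

lemma cnotGate_eq_permMatrix (n : ℕ) {t : ℕ} (ht : 0 < t) (htn : t ≤ n) :
    cnotGate n t = (cnotPerm n ht htn).permMatrix ℂ := by
  ext k j
  simp only [cnotGate, Equiv.Perm.permMatrix, PEquiv.toMatrix_apply, Equiv.toPEquiv_apply,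
    Option.mem_def, Option.some.injEq, Fin.ext_iff, cnotPerm_apply_val]
  change (if (k : ℕ) = cnotFun t j then (1 : ℂ) else 0) = _
  refine if_congr ⟨fun h => ?_, fun h => ?_⟩ rfl rfl
  · rw [h, cnotFun_involutive ht]
  · rw [← h, cnotFun_involutive ht]

lemma cnotGate_mul_apply (n : ℕ) {t : ℕ} (ht : 0 < t) (htn : t ≤ n)
    (X : Matrix (Fin (2 ^ (n + 1))) (Fin (2 ^ (n + 1))) ℂ) (k j : Fin (2 ^ (n + 1))) :
    (cnotGate n t * X) k j = X (cnotPerm n ht htn k) j := by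
  rw [cnotGate_eq_permMatrix n ht htn, Equiv.Perm.permMatrix, PEquiv.toMatrix_toPEquiv_mul]
  rfl

lemma Nat.testBit_eq_of_div_two_eq {k k' i : ℕ} (h : k / 2 = k' / 2) (hi : 0 < i) :
    k.testBit i = k'.testBit i := by
  obtain ⟨i, rfl⟩ := Nat.exists_eq_succ_of_ne_zero hi.ne'
  rw [Nat.testBit_succ, Nat.testBit_succ, h]

lemma Nat.eq_of_div_two_eq_of_testBit_zero_eq {k k' : ℕ} (h : k / 2 = k' / 2)
    (h0 : k.testBit 0 = k'.testBit 0) : k = k' :=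
  Nat.eq_of_testBit_eq fun i => by
    rcases Nat.eq_zero_or_pos i with rfl | hi
    · exact h0
    · exact Nat.testBit_eq_of_div_two_eq h hi

lemma exists_div_two_eq_testBit_zero_eq {N : ℕ} (k : Fin (2 ^ (N + 1))) (b : Bool) :
    ∃ k₀ : Fin (2 ^ (N + 1)), (k₀ : ℕ) / 2 = k / 2 ∧ (k₀ : ℕ).testBit 0 = b := by
  have : (k : ℕ) < 2 ^ N * 2 := pow_succ 2 N ▸ k.isLt
  refine ⟨⟨2 * (k / 2) + b.toNat, ?_⟩, ?_, ?_⟩ <;> cases b <;> simp [Nat.testBit_zero] <;> omega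

/-- The photon bit just after step `m` on a path from `|j⟩` to `|k⟩`: the CNOT of step `m + 1`
copies it into detector bit `n - m`, so it can be read off from `k` and `j`. -/
def photonBit (n k j : ℕ) : ℕ → Bool
  | 0 => j.testBit 0
  | m + 1 => k.testBit (n - m) ^^ j.testBit (n - m)

def DetectorBitsAgree (l k j : ℕ) : Prop := ∀ i, 0 < i → i ≤ l → k.testBit i = j.testBit i

/-- `|k⟩` occurs in `S_m ⋯ S_1 |j⟩`: the detector bits not yet touched agree with those of `j`,
and the photon bit is the one forced by the path. -/
def Reachable (n m k j : ℕ) : Prop :=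
  DetectorBitsAgree (n - m) k j ∧ k.testBit 0 = photonBit n k j m

lemma photonBit_eq_of_div_two_eq {n m k k' : ℕ} (j : ℕ) (hm : m ≤ n) (h : k / 2 = k' / 2) :
    photonBit n k j m = photonBit n k' j m := by
  cases m with
  | zero => rfl
  | succ m => simp only [photonBit, Nat.testBit_eq_of_div_two_eq h (by omega : 0 < n - m)]

lemma detectorBitsAgree_iff_of_div_two_eq {l k k' : ℕ} (j : ℕ) (h : k / 2 = k' / 2) :
    DetectorBitsAgree l k j ↔ DetectorBitsAgree l k' j := by
  refine forall_congr' fun i => forall_congr' fun hi => ?_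
  rw [Nat.testBit_eq_of_div_two_eq h hi]

lemma reachable_zero_iff {n k j : ℕ} (hk : k < 2 ^ (n + 1)) (hj : j < 2 ^ (n + 1)) :
    Reachable n 0 k j ↔ k = j := by
  refine ⟨fun ⟨hagree, h0⟩ => Nat.eq_of_testBit_eq fun i => ?_,
    fun h => ⟨fun _ _ _ => h ▸ rfl, h ▸ rfl⟩⟩
  rcases Nat.eq_zero_or_pos i with rfl | hi
  · exact h0
  by_cases hin : i ≤ n
  · exact hagree i hi hin
  · have hpow : 2 ^ (n + 1) ≤ 2 ^ i := Nat.pow_le_pow_right (by norm_num) (by omega)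
    rw [Nat.testBit_lt_two_pow (hk.trans_le hpow), Nat.testBit_lt_two_pow (hj.trans_le hpow)]

lemma reachable_succ_iff {n m k j : ℕ} (hm : m < n) :
    Reachable n (m + 1) k j ↔ DetectorBitsAgree (n - m) (cnotFun (n - m) k) j := by
  simp only [Reachable, DetectorBitsAgree, photonBit, testBit_cnotFun]
  constructor
  · rintro ⟨hagree, h0⟩ i hi hit
    rcases hit.lt_or_eq with hlt | rfl
    · simp [hlt.ne, hagree i hi (by omega)]
    · simp [h0]
  · intro h
    refine ⟨fun i hi hit => by simpa [show i ≠ n - m by omega] using h i hi (by omega), ?_⟩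
    have := h (n - m) (by omega) le_rfl
    simp only [decide_true, Bool.true_and] at this
    rw [← this, ← Bool.xor_assoc, Bool.xor_self, Bool.false_xor]

open scoped Classical in
lemma norm_photonGate_mul_apply {n m : ℕ} {A : Matrix (Fin 2) (Fin 2) ℂ} {c r : ℝ}
    (hA : ∀ a b, ‖A a b‖ = c) (hm : m ≤ n)
    {X : Matrix (Fin (2 ^ (n + 1))) (Fin (2 ^ (n + 1))) ℂ} {j : Fin (2 ^ (n + 1))}
    (hX : ∀ k : Fin (2 ^ (n + 1)), ‖X k j‖ = if Reachable n m k j then r else 0)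
    (k : Fin (2 ^ (n + 1))) :
    ‖(photonGate n A * X) k j‖ = if DetectorBitsAgree (n - m) k j then c * r else 0 := by
  obtain ⟨k₀, hk₀, hbit⟩ := exists_div_two_eq_testBit_zero_eq k (photonBit n k j m)
  have hsupport : ∀ k' : Fin (2 ^ (n + 1)), (k' : ℕ) / 2 = k / 2 → k' ≠ k₀ → X k' j = 0 := by
    refine fun k' hk' hne => norm_eq_zero.mp ?_
    rw [hX, if_neg]
    rintro ⟨-, hbit'⟩
    refine hne (Fin.ext (Nat.eq_of_div_two_eq_of_testBit_zero_eq (hk'.trans hk₀.symm) ?_))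
    rw [hbit', hbit, photonBit_eq_of_div_two_eq j hm hk']
  rw [photonGate_mul_apply_of_support n A X hk₀ hsupport, norm_mul, hA, hX, Reachable, hbit,
    photonBit_eq_of_div_two_eq j hm hk₀, detectorBitsAgree_iff_of_div_two_eq j hk₀]
  simp only [and_true, mul_ite, mul_zero]

open scoped Classical in
lemma norm_Sprod_apply {n m : ℕ} (φ : ℕ → ℝ) (hm : m ≤ n) (k j : Fin (2 ^ (n + 1))) :
    ‖Sprod n φ m k j‖ = if Reachable n m k j then (1 / Real.sqrt 2) ^ m else 0 := by
  induction m generalizing k with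
  | zero =>
    rw [Sprod, one_apply, reachable_zero_iff k.isLt j.isLt, ← Fin.ext_iff]
    split_ifs <;> simp
  | succ m ih =>
    rw [Sprod, stepGate, if_pos hm, show n + 1 - (m + 1) = n - m by omega, mul_assoc,
      cnotGate_mul_apply n (by omega) (by omega),
      norm_photonGate_mul_apply (norm_phaseGate_mul_RXgate_apply _) (by omega) (ih (by omega)),
      cnotPerm_apply_val, ← reachable_succ_iff (by omega), pow_succ' (1 / Real.sqrt 2)]

lemma norm_Uphi_apply (n : ℕ) (φ : ℕ → ℝ) (k j : Fin (2 ^ (n + 1))) :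
    ‖Uphi n φ k j‖ = (1 / Real.sqrt 2) ^ (n + 1) := by
  have hagree : DetectorBitsAgree (n - n) k j := fun i hi hin => by omega
  rw [Uphi, Sprod, stepGate, if_neg (by omega), one_mul,
    norm_photonGate_mul_apply (norm_phaseGate_mul_RXgate_apply _) le_rfl
      (fun k => norm_Sprod_apply φ le_rfl k j),
    if_pos hagree, pow_succ' (1 / Real.sqrt 2)]

lemma stepGate_mem_unitaryGroup (n : ℕ) (φ : ℕ → ℝ) {k : ℕ} (hk : 0 < k) :
    stepGate n φ k ∈ unitaryGroup (Fin (2 ^ (n + 1))) ℂ := by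
  have hphoton := photonGate_mem_unitaryGroup n
    (mul_mem (phaseGate_mem_unitaryGroup (φ k)) RXgate_mem_unitaryGroup)
  unfold stepGate
  split_ifs
  · rw [cnotGate_eq_permMatrix n (by omega) (by omega)]
    exact mul_mem (Equiv.Perm.permMatrix_mem_unitaryGroup _) hphoton
  · rwa [one_mul]

lemma Sprod_mem_unitaryGroup (n : ℕ) (φ : ℕ → ℝ) :
    ∀ m, Sprod n φ m ∈ unitaryGroup (Fin (2 ^ (n + 1))) ℂ
  | 0 => one_mem _
  | m + 1 => mul_mem (stepGate_mem_unitaryGroup n φ m.succ_pos) (Sprod_mem_unitaryGroup n φ m)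

theorem stmt6_general (n : ℕ) (φ : ℕ → ℝ) :
    Uphi n φ ∈ Matrix.unitaryGroup (Fin (2 ^ (n + 1))) ℂ ∧
    ∀ k j : Fin (2 ^ (n + 1)),
      ‖Uphi n φ k j‖ = (1 / Real.sqrt 2) ^ (n + 1) :=
  ⟨Sprod_mem_unitaryGroup n φ (n + 1), norm_Uphi_apply n φ⟩

/-- Every entry of the matrix of `U_Φ` in the computational basis has
modulus exactly `2^{−(n+1)/2}`; equivalently, `2^{(n+1)/2}·U_Φ` is a complex Hadamard
matrix: `U_Φ` is unitary and all its entries have modulus `(1/√2)^{n+1}`. -/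
theorem stmt6 (n : ℕ) (hn : 1 ≤ n) (φ : ℕ → ℝ) :
    Uphi n φ ∈ Matrix.unitaryGroup (Fin (2 ^ (n + 1))) ℂ ∧
    ∀ k j : Fin (2 ^ (n + 1)),
      ‖Uphi n φ k j‖ = (1 / Real.sqrt 2) ^ (n + 1) :=
  stmt6_general n φ
end

section
/- For every integer k with 0 ≤ k < 2^m and every integer t with 0 ≤ t < 2^{n+1−m}, the coordinate of U_Φ · E_{m,s,α} at basis index k + t·2^m equals its coordinate at basis index k; i.e. the coordinates of U_Φ · E_{m,s,α} are independent of t within each residue class modulo 2^m. -/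
open Complex Matrix

/-- The vector `E_{m,s,α} ∈ ℂ^{2^{n+1}}` whose coordinate at basis index
`j = Σ_{l=0}^{n} j_l 2^l` is `2^{−n/2} · (−1)^{Σ_{l=1}^{m−1} j_l s_l} · α_{j₀}`. -/
noncomputable def Evec (n m : ℕ) (s : ℕ → Bool) (α : Fin 2 → ℂ) :
    Fin (2 ^ (n + 1)) → ℂ :=
  fun j => ((1 / Real.sqrt 2 : ℝ) ^ n : ℂ) *
    (∏ l ∈ Finset.Icc 1 (m - 1), if (j : ℕ).testBit l ∧ s l then (-1 : ℂ) else 1) *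
    α ⟨(j : ℕ) % 2, by omega⟩

/-!
Call a vector on `ℂ^{2^{n+1}}` `2^m`-invariant if its coordinate at `|j⟩` depends only on
`j mod 2^m`. For `m ≥ 1` each gate of the circuit preserves this property: the photon gate
mixes `|j⟩` only with `|j XOR 1⟩`, and the CNOT permutes the basis by `j ↦ j XOR 2^t` on odd
`j`; both maps commute with reduction modulo `2^m`, because the only bit they read, bit `0`,
is determined by `j mod 2^m`. The input `E_{m,s,α}` is `2^m`-invariant since it only reads
bits `0, …, m−1` of its index, hence so is `U_Φ E_{m,s,α}`, and `k + t·2^m ≡ k (mod 2^m)`.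
-/

def ModInvariant {R : Type*} {N : ℕ} (d : ℕ) (v : Fin N → R) : Prop :=
  ∀ a b : Fin N, (a : ℕ) ≡ b [MOD d] → v a = v b

lemma Nat.ModEq.two_mul_div_two {d a b : ℕ} (hd : 2 ∣ d) (h : a ≡ b [MOD d]) :
    2 * (a / 2) ≡ 2 * (b / 2) [MOD d] := by
  have hpar : a % 2 = b % 2 := h.of_dvd hd
  refine Nat.ModEq.add_right_cancel' (a % 2) ?_
  rwa [Nat.div_add_mod, hpar, Nat.div_add_mod]

lemma two_mul_div_two_add_one_lt {a n : ℕ} (ha : a < 2 ^ (n + 1)) :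
    2 * (a / 2) + 1 < 2 ^ (n + 1) := by
  rw [pow_succ] at ha ⊢
  omega

lemma photonGate_mulVec_apply (n : ℕ) (A : Matrix (Fin 2) (Fin 2) ℂ)
    (v : Fin (2 ^ (n + 1)) → ℂ) (a : Fin (2 ^ (n + 1))) :
    (photonGate n A *ᵥ v) a =
      A ⟨a % 2, by omega⟩ 0 * v ⟨2 * (a / 2), (Nat.lt_succ_self _).trans
          (two_mul_div_two_add_one_lt a.isLt)⟩ +
        A ⟨a % 2, by omega⟩ 1 * v ⟨2 * (a / 2) + 1, two_mul_div_two_add_one_lt a.isLt⟩ := by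
  have hlt := two_mul_div_two_add_one_lt a.isLt
  rw [mulVec, dotProduct, Fintype.sum_eq_add ⟨2 * (a / 2), by omega⟩ ⟨2 * (a / 2) + 1, hlt⟩
    (by simp [Fin.ext_iff])]
  · have hodd : (2 * ((a : ℕ) / 2) + 1) / 2 = a / 2 := by omega
    simp [photonGate, hodd]
  · intro j ⟨h0, h1⟩
    have hdiv : (a : ℕ) / 2 ≠ j / 2 := by
      simp only [ne_eq, Fin.ext_iff] at h0 h1
      omega
    simp [photonGate, hdiv]

lemma ModInvariant.photonGate_mulVec {n d : ℕ} (hd : 2 ∣ d) (A : Matrix (Fin 2) (Fin 2) ℂ)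
    {v : Fin (2 ^ (n + 1)) → ℂ} (hv : ModInvariant d v) :
    ModInvariant d (photonGate n A *ᵥ v) := by
  intro a b hab
  have hpar : (a : ℕ) % 2 = b % 2 := hab.of_dvd hd
  have heven := hab.two_mul_div_two hd
  rw [photonGate_mulVec_apply, photonGate_mulVec_apply]
  congr 1 <;> congr 1
  · simp only [hpar]
  · exact hv _ _ heven
  · simp only [hpar]
  · exact hv _ _ (heven.add_right 1)

def cnotIndex (t j : ℕ) : ℕ := if j % 2 = 1 then j ^^^ 2 ^ t else j

lemma cnotIndex_mod_two {t : ℕ} (ht : t ≠ 0) (j : ℕ) : cnotIndex t j % 2 = j % 2 := by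
  have heven : 2 ^ t % 2 = 0 := Nat.two_pow_mod_two_eq_zero.mpr (Nat.pos_of_ne_zero ht)
  unfold cnotIndex
  split_ifs
  · rw [Nat.xor_mod_two_eq, Nat.add_mod, heven, add_zero, Nat.mod_mod]
  · rfl

lemma cnotIndex_cnotIndex {t : ℕ} (ht : t ≠ 0) (j : ℕ) : cnotIndex t (cnotIndex t j) = j := by
  have hpar := cnotIndex_mod_two ht j
  unfold cnotIndex at hpar ⊢
  split_ifs at hpar ⊢ <;> first | omega | simp

lemma cnotIndex_lt {n t j : ℕ} (htn : t ≤ n) (hj : j < 2 ^ (n + 1)) :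
    cnotIndex t j < 2 ^ (n + 1) := by
  unfold cnotIndex
  split_ifs
  · exact Nat.xor_lt_two_pow hj (Nat.pow_lt_pow_right (by norm_num) (by omega))
  · exact hj

lemma cnotIndex_modEq {m a b : ℕ} (hm : 0 < m) (t : ℕ) (h : a ≡ b [MOD 2 ^ m]) :
    cnotIndex t a ≡ cnotIndex t b [MOD 2 ^ m] := by
  have hpar : a % 2 = b % 2 := h.of_dvd (dvd_pow_self 2 hm.ne')
  unfold cnotIndex Nat.ModEq at *
  split_ifs <;> simp_all [Nat.xor_mod_two_pow]

lemma cnotGate_apply (n t : ℕ) (a j : Fin (2 ^ (n + 1))) :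
    cnotGate n t a j = if (a : ℕ) = cnotIndex t j then 1 else 0 :=
  rfl

lemma cnotGate_mulVec_apply {n t : ℕ} (ht : t ≠ 0) (htn : t ≤ n) (v : Fin (2 ^ (n + 1)) → ℂ)
    (a : Fin (2 ^ (n + 1))) :
    (cnotGate n t *ᵥ v) a = v ⟨cnotIndex t a, cnotIndex_lt htn a.isLt⟩ := by
  rw [mulVec, dotProduct, Fintype.sum_eq_single ⟨cnotIndex t a, cnotIndex_lt htn a.isLt⟩]
  · simp [cnotGate_apply, cnotIndex_cnotIndex ht]
  · intro j hj
    have hne : (a : ℕ) ≠ cnotIndex t j := fun h =>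
      hj (Fin.ext (by simp only [h, cnotIndex_cnotIndex ht]))
    simp [cnotGate_apply, hne]

lemma ModInvariant.cnotGate_mulVec {n m t : ℕ} (hm : 0 < m) (ht : t ≠ 0) (htn : t ≤ n)
    {v : Fin (2 ^ (n + 1)) → ℂ} (hv : ModInvariant (2 ^ m) v) :
    ModInvariant (2 ^ m) (cnotGate n t *ᵥ v) := by
  intro a b hab
  rw [cnotGate_mulVec_apply ht htn, cnotGate_mulVec_apply ht htn]
  exact hv _ _ (cnotIndex_modEq hm t hab)

lemma ModInvariant.stepGate_mulVec {n m : ℕ} (hm : 0 < m) (φ : ℕ → ℝ) {k : ℕ} (hk : k ≠ 0)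
    {v : Fin (2 ^ (n + 1)) → ℂ} (hv : ModInvariant (2 ^ m) v) :
    ModInvariant (2 ^ m) (stepGate n φ k *ᵥ v) := by
  have hphoton := hv.photonGate_mulVec (dvd_pow_self 2 hm.ne') (phaseGate (φ k) * RXgate)
  rw [stepGate, ← mulVec_mulVec]
  split_ifs with hkn
  · exact hphoton.cnotGate_mulVec hm (by omega) (by omega)
  · rwa [one_mulVec]

lemma ModInvariant.Sprod_mulVec {n m : ℕ} (hm : 0 < m) (φ : ℕ → ℝ)
    {v : Fin (2 ^ (n + 1)) → ℂ} (hv : ModInvariant (2 ^ m) v) (k : ℕ) :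
    ModInvariant (2 ^ m) (Sprod n φ k *ᵥ v) := by
  induction k with
  | zero => rwa [Sprod, one_mulVec]
  | succ k ih =>
    rw [Sprod, ← mulVec_mulVec]
    exact ih.stepGate_mulVec hm φ k.succ_ne_zero

lemma modInvariant_Evec (n : ℕ) {m : ℕ} (hm : 0 < m) (s : ℕ → Bool) (α : Fin 2 → ℂ) :
    ModInvariant (2 ^ m) (Evec n m s α) := by
  intro a b hab
  have hpar : (a : ℕ) % 2 = b % 2 := hab.of_dvd (dvd_pow_self 2 hm.ne')
  have hbits : ∀ l < m, (a : ℕ).testBit l = (b : ℕ).testBit l := fun l hl => by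
    simpa [Nat.testBit_mod_two_pow, hl] using congrArg (Nat.testBit · l) hab
  unfold Evec
  congr 2
  · refine Finset.prod_congr rfl fun l hl => ?_
    rw [hbits l (Nat.lt_of_le_pred hm (Finset.mem_Icc.mp hl).2)]
  · exact Fin.ext hpar

/-- For every `0 ≤ k < 2^m` and `0 ≤ t < 2^{n+1−m}`, the coordinate of
`U_Φ · E_{m,s,α}` at basis index `k + t·2^m` equals its coordinate at basis index `k`;
i.e. the coordinates of `U_Φ · E_{m,s,α}` are independent of `t` within each residue
class modulo `2^m`. -/
theorem stmt8 (n m : ℕ) (hm : 1 ≤ m) (hmn : m ≤ n + 1)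
    (φ : ℕ → ℝ) (s : ℕ → Bool) (α : Fin 2 → ℂ)
    (k t : ℕ) (hk : k < 2 ^ m) (ht : t < 2 ^ (n + 1 - m)) :
    (Uphi n φ *ᵥ Evec n m s α) ⟨k + t * 2 ^ m, by
        calc k + t * 2 ^ m < 2 ^ m + t * 2 ^ m := Nat.add_lt_add_right hk _
          _ = (t + 1) * 2 ^ m := by ring
          _ ≤ 2 ^ (n + 1 - m) * 2 ^ m := Nat.mul_le_mul_right _ (Nat.succ_le_of_lt ht)
          _ = 2 ^ (n + 1) := by rw [← pow_add]; congr 1; omega⟩ =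
      (Uphi n φ *ᵥ Evec n m s α)
        ⟨k, lt_of_lt_of_le hk (Nat.pow_le_pow_right (by norm_num) hmn)⟩ := by
  have hU : ModInvariant (2 ^ m) (Uphi n φ *ᵥ Evec n m s α) :=
    (modInvariant_Evec n hm s α).Sprod_mulVec hm φ (n + 1)
  exact hU _ _ (Nat.add_mul_mod_self_right k t (2 ^ m))
end
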